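/- (Analytic core of Proposition 4.8.) Let Φ be a (sub)critical branching mechanism (α ≥ 0), not identically zero, satisfying Assumption H2: ∫_1^∞ dλ/Φ(λ) < ∞ (note that Φ(λ) > 0 for all λ > 0 in this case, and ∫_{0+}^1 dλ/Φ(λ) = ∞). Then there is a unique function v̄ : (0,∞) → (0,∞) with ∫_{v̄(t)}^∞ dλ/Φ(λ) = t for all t > 0; v̄ is strictly decreasing with v̄(t) → 0 as t → ∞ and satisfies v̄'(t) = −Φ(v̄(t)). Moreover, for every t > 0 and all x, y > 0, lim_{r→∞} [ y e^{−y v̄(r−t)} Φ(v̄(r−t)) ] / [ x e^{−x v̄(r)} Φ(v̄(r)) ] = (y/x) e^{αt}. -/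

import Mathlib

open MeasureTheory Filter Set

/-- The branching mechanism `Φ(λ) = αλ + βλ² + ∫_{(0,∞)} (e^{-λθ} - 1 + λθ) π(dθ)`. -/
noncomputable def Phi (α β : ℝ) (π : Measure ℝ) (lam : ℝ) : ℝ :=
  α * lam + β * lam ^ 2 + ∫ θ, (Real.exp (-lam * θ) - 1 + lam * θ) ∂π

/-!
Write `G(u) = ∫_u^∞ dλ/Φ(λ)`. Since `Φ(λ) ≤ Cλ` on `(0, 1]`, `G` blows up like `-log u / C` at
`0+`, and it tends to `0` at `∞` by H2; hence `G` is a decreasing bijection of `(0, ∞)`, and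
`v̄ = G⁻¹` satisfies `v̄' = -Φ(v̄)`. Along `v̄` one gets `(log Φ(v̄))' = -Φ'(v̄)`, and `Φ'(0+) = α`
by dominated convergence, so the mean value theorem gives
`log Φ(v̄(r - t)) - log Φ(v̄(r)) → αt`; the factors `e^{-x v̄}` tend to `1`.
-/

open Topology

noncomputable def tailIntegral (f : ℝ → ℝ) (u : ℝ) : ℝ :=
  ∫ l in Ioi u, (f l)⁻¹

noncomputable def tailIntegralInv (f : ℝ → ℝ) : ℝ → ℝ :=
  Function.invFunOn (tailIntegral f) (Ioi 0)

section TailIntegral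

variable {f : ℝ → ℝ} {C : ℝ}

theorem integrableOn_inv_Ioi (hf : ContinuousOn f (Ioi 0)) (hpos : ∀ l, 0 < l → 0 < f l)
    (hint : IntegrableOn (fun l => (f l)⁻¹) (Ioi 1)) {u : ℝ} (hu : 0 < u) :
    IntegrableOn (fun l => (f l)⁻¹) (Ioi u) := by
  rcases le_or_gt 1 u with h1 | h1
  · exact hint.mono_set (Ioi_subset_Ioi h1)
  · rw [← Ioc_union_Ioi_eq_Ioi h1.le]
    refine IntegrableOn.union ?_ hint
    have hcont : ContinuousOn (fun l => (f l)⁻¹) (Icc u 1) :=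
      (hf.inv₀ fun l hl => (hpos l hl).ne').mono fun l hl => hu.trans_le hl.1
    exact hcont.integrableOn_Icc.mono_set Ioc_subset_Icc_self

theorem tailIntegral_eq_intervalIntegral_add (hf : ContinuousOn f (Ioi 0))
    (hpos : ∀ l, 0 < l → 0 < f l) (hint : IntegrableOn (fun l => (f l)⁻¹) (Ioi 1))
    {u c : ℝ} (hu : 0 < u) (huc : u ≤ c) :
    tailIntegral f u = (∫ l in u..c, (f l)⁻¹) + tailIntegral f c := by
  have hIoi := integrableOn_inv_Ioi hf hpos hint hu
  rw [tailIntegral, tailIntegral, intervalIntegral.integral_of_le huc,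
    ← Ioc_union_Ioi_eq_Ioi huc, setIntegral_union (Ioc_disjoint_Ioi le_rfl) measurableSet_Ioi
      (hIoi.mono_set Ioc_subset_Ioi_self) (hIoi.mono_set (Ioi_subset_Ioi huc))]

theorem tailIntegral_nonneg (hpos : ∀ l, 0 < l → 0 < f l) {u : ℝ} (hu : 0 < u) :
    0 ≤ tailIntegral f u :=
  setIntegral_nonneg measurableSet_Ioi fun l hl => (inv_pos.2 (hpos l (hu.trans hl))).le

theorem tailIntegral_strictAntiOn (hf : ContinuousOn f (Ioi 0)) (hpos : ∀ l, 0 < l → 0 < f l)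
    (hint : IntegrableOn (fun l => (f l)⁻¹) (Ioi 1)) :
    StrictAntiOn (tailIntegral f) (Ioi 0) := by
  intro u hu c _ huc
  have hcont : ContinuousOn (fun l => (f l)⁻¹) (uIcc u c) :=
    (hf.inv₀ fun l hl => (hpos l hl).ne').mono fun l hl => by
      rw [uIcc_of_le huc.le] at hl; exact hu.trans_le hl.1
  have hI : 0 < ∫ l in u..c, (f l)⁻¹ :=
    intervalIntegral.intervalIntegral_pos_of_pos_on hcont.intervalIntegrable
      (fun l hl => inv_pos.2 (hpos l (lt_trans hu hl.1))) huc
  rw [tailIntegral_eq_intervalIntegral_add hf hpos hint hu huc.le]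
  linarith

theorem tailIntegral_pos (hf : ContinuousOn f (Ioi 0)) (hpos : ∀ l, 0 < l → 0 < f l)
    (hint : IntegrableOn (fun l => (f l)⁻¹) (Ioi 1)) {u : ℝ} (hu : 0 < u) :
    0 < tailIntegral f u :=
  (tailIntegral_nonneg hpos (hu.trans (lt_add_one u))).trans_lt
    (tailIntegral_strictAntiOn hf hpos hint hu (hu.trans (lt_add_one u)) (lt_add_one u))

theorem hasDerivAt_tailIntegral (hf : ContinuousOn f (Ioi 0)) (hpos : ∀ l, 0 < l → 0 < f l)
    (hint : IntegrableOn (fun l => (f l)⁻¹) (Ioi 1)) {u : ℝ} (hu : 0 < u) :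
    HasDerivAt (tailIntegral f) (-(f u)⁻¹) u := by
  have hcont : ContinuousOn (fun l => (f l)⁻¹) (Ioi 0) := hf.inv₀ fun l hl => (hpos l hl).ne'
  have hint' : IntervalIntegrable (fun l => (f l)⁻¹) volume u (u + 1) :=
    (hcont.mono fun l hl => by
      simp only [uIcc_of_le (lt_add_one u).le] at hl; exact hu.trans_le hl.1).intervalIntegrable
  have hderiv := (intervalIntegral.integral_hasDerivAt_left hint'
    (hcont.stronglyMeasurableAtFilter isOpen_Ioi u hu)
    (hcont.continuousAt (Ioi_mem_nhds hu))).add_const (tailIntegral f (u + 1))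
  refine hderiv.congr_of_eventuallyEq ?_
  filter_upwards [Ioo_mem_nhds hu (lt_add_one u)] with w hw
  exact tailIntegral_eq_intervalIntegral_add hf hpos hint hw.1 hw.2.le

theorem tendsto_tailIntegral_atTop (hf : ContinuousOn f (Ioi 0)) (hpos : ∀ l, 0 < l → 0 < f l)
    (hint : IntegrableOn (fun l => (f l)⁻¹) (Ioi 1)) :
    Tendsto (tailIntegral f) atTop (𝓝 0) := by
  have h : Tendsto (fun u => tailIntegral f 1 - ∫ l in (1 : ℝ)..u, (f l)⁻¹) atTop
      (𝓝 (tailIntegral f 1 - tailIntegral f 1)) :=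
    tendsto_const_nhds.sub (intervalIntegral_tendsto_integral_Ioi 1 hint tendsto_id)
  rw [sub_self] at h
  refine h.congr' ?_
  filter_upwards [eventually_ge_atTop 1] with u hu
  rw [tailIntegral_eq_intervalIntegral_add hf hpos hint one_pos hu]
  ring

theorem neg_log_div_le_intervalIntegral_inv (hf : ContinuousOn f (Ioi 0))
    (hpos : ∀ l, 0 < l → 0 < f l) (hle : ∀ l ∈ Ioc 0 1, f l ≤ C * l) {u : ℝ} (hu : 0 < u)
    (hu1 : u ≤ 1) : -Real.log u / C ≤ ∫ l in u..1, (f l)⁻¹ := by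
  have hC : 0 < C := by simpa using (hpos 1 one_pos).trans_le (hle 1 ⟨one_pos, le_rfl⟩)
  have hsub : uIcc u 1 ⊆ Ioi 0 := fun l hl => by
    simp only [uIcc_of_le hu1] at hl; exact hu.trans_le hl.1
  calc -Real.log u / C = ∫ l in u..1, (C * l)⁻¹ := by
        simp only [mul_inv, intervalIntegral.integral_const_mul, integral_inv_of_pos hu one_pos,
          one_div, Real.log_inv]
        ring
    _ ≤ ∫ l in u..1, (f l)⁻¹ := by
      refine intervalIntegral.integral_mono_on hu1 ?_ ?_ fun l hl => ?_
      · exact ((continuousOn_const.mul continuousOn_id).inv₀ fun l hl =>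
          (mul_pos hC (hsub hl)).ne').intervalIntegrable
      · exact ((hf.inv₀ fun l hl => (hpos l hl).ne').mono hsub).intervalIntegrable
      · exact inv_anti₀ (hpos l (hu.trans_le hl.1)) (hle l ⟨hu.trans_le hl.1, hl.2⟩)

theorem tendsto_tailIntegral_nhdsGT_zero (hf : ContinuousOn f (Ioi 0))
    (hpos : ∀ l, 0 < l → 0 < f l) (hint : IntegrableOn (fun l => (f l)⁻¹) (Ioi 1))
    (hle : ∀ l ∈ Ioc 0 1, f l ≤ C * l) : Tendsto (tailIntegral f) (𝓝[>] 0) atTop := by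
  have hC : 0 < C := by simpa using (hpos 1 one_pos).trans_le (hle 1 ⟨one_pos, le_rfl⟩)
  have hlog : Tendsto (fun u => -Real.log u / C + tailIntegral f 1) (𝓝[>] 0) atTop :=
    tendsto_atTop_add_const_right _ _
      ((tendsto_neg_atBot_atTop.comp Real.tendsto_log_nhdsGT_zero).atTop_div_const hC)
  refine tendsto_atTop_mono' _ ?_ hlog
  filter_upwards [Ioc_mem_nhdsGT one_pos] with u hu
  rw [tailIntegral_eq_intervalIntegral_add hf hpos hint hu.1 hu.2]
  linarith [neg_log_div_le_intervalIntegral_inv hf hpos hle hu.1 hu.2]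

theorem not_integrableOn_inv_Ioc_zero_one (hf : ContinuousOn f (Ioi 0))
    (hpos : ∀ l, 0 < l → 0 < f l) (hint : IntegrableOn (fun l => (f l)⁻¹) (Ioi 1))
    (hle : ∀ l ∈ Ioc 0 1, f l ≤ C * l) : ¬ IntegrableOn (fun l => (f l)⁻¹) (Ioc 0 1) := by
  intro hint₀
  obtain ⟨u, hbig, hu⟩ := ((tendsto_tailIntegral_nhdsGT_zero hf hpos hint hle).eventually_gt_atTop
    ((∫ l in Ioc 0 1, (f l)⁻¹) + tailIntegral f 1)).and (Ioc_mem_nhdsGT one_pos) |>.exists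
  have hmono : ∫ l in u..1, (f l)⁻¹ ≤ ∫ l in Ioc 0 1, (f l)⁻¹ := by
    rw [intervalIntegral.integral_of_le hu.2]
    refine setIntegral_mono_set hint₀ ?_ (Ioc_subset_Ioc_left hu.1.le).eventuallyLE
    filter_upwards [ae_restrict_mem measurableSet_Ioc] with l hl
    exact (inv_pos.2 (hpos l hl.1)).le
  rw [tailIntegral_eq_intervalIntegral_add hf hpos hint hu.1 hu.2] at hbig
  linarith

theorem tailIntegral_surjOn (hf : ContinuousOn f (Ioi 0)) (hpos : ∀ l, 0 < l → 0 < f l)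
    (hint : IntegrableOn (fun l => (f l)⁻¹) (Ioi 1)) (hle : ∀ l ∈ Ioc 0 1, f l ≤ C * l) :
    SurjOn (tailIntegral f) (Ioi 0) (Ioi 0) := by
  intro t ht
  obtain ⟨a, hat, ha⟩ := ((tendsto_tailIntegral_nhdsGT_zero hf hpos hint hle).eventually_ge_atTop
    t).and self_mem_nhdsWithin |>.exists
  obtain ⟨b, hbt, hab⟩ := ((tendsto_tailIntegral_atTop hf hpos hint).eventually_lt_const
    ht).and (eventually_ge_atTop a) |>.exists
  have hcont : ContinuousOn (tailIntegral f) (Icc a b) := fun u hu =>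
    (hasDerivAt_tailIntegral hf hpos hint (lt_of_lt_of_le ha hu.1)).continuousAt.continuousWithinAt
  obtain ⟨u, hu, hut⟩ := intermediate_value_Icc' hab hcont ⟨hbt.le, hat⟩
  exact ⟨u, lt_of_lt_of_le ha hu.1, hut⟩

theorem tailIntegral_bijOn (hf : ContinuousOn f (Ioi 0)) (hpos : ∀ l, 0 < l → 0 < f l)
    (hint : IntegrableOn (fun l => (f l)⁻¹) (Ioi 1)) (hle : ∀ l ∈ Ioc 0 1, f l ≤ C * l) :
    BijOn (tailIntegral f) (Ioi 0) (Ioi 0) :=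
  ⟨fun _ hu => tailIntegral_pos hf hpos hint hu, (tailIntegral_strictAntiOn hf hpos hint).injOn,
    tailIntegral_surjOn hf hpos hint hle⟩

theorem invOn_tailIntegralInv (hf : ContinuousOn f (Ioi 0)) (hpos : ∀ l, 0 < l → 0 < f l)
    (hint : IntegrableOn (fun l => (f l)⁻¹) (Ioi 1)) (hle : ∀ l ∈ Ioc 0 1, f l ≤ C * l) :
    InvOn (tailIntegralInv f) (tailIntegral f) (Ioi 0) (Ioi 0) :=
  (tailIntegral_bijOn hf hpos hint hle).invOn_invFunOn

theorem bijOn_tailIntegralInv (hf : ContinuousOn f (Ioi 0)) (hpos : ∀ l, 0 < l → 0 < f l)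
    (hint : IntegrableOn (fun l => (f l)⁻¹) (Ioi 1)) (hle : ∀ l ∈ Ioc 0 1, f l ≤ C * l) :
    BijOn (tailIntegralInv f) (Ioi 0) (Ioi 0) :=
  (tailIntegral_bijOn hf hpos hint hle).symm (invOn_tailIntegralInv hf hpos hint hle).symm

theorem eq_tailIntegralInv_of_tailIntegral_eq (hf : ContinuousOn f (Ioi 0))
    (hpos : ∀ l, 0 < l → 0 < f l) (hint : IntegrableOn (fun l => (f l)⁻¹) (Ioi 1))
    (hle : ∀ l ∈ Ioc 0 1, f l ≤ C * l) {u t : ℝ} (hu : 0 < u) (h : tailIntegral f u = t) :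
    u = tailIntegralInv f t :=
  h ▸ ((invOn_tailIntegralInv hf hpos hint hle).1 hu).symm

theorem tailIntegralInv_strictAntiOn (hf : ContinuousOn f (Ioi 0))
    (hpos : ∀ l, 0 < l → 0 < f l) (hint : IntegrableOn (fun l => (f l)⁻¹) (Ioi 1))
    (hle : ∀ l ∈ Ioc 0 1, f l ≤ C * l) : StrictAntiOn (tailIntegralInv f) (Ioi 0) := by
  intro s hs r hr hsr
  have hinv := invOn_tailIntegralInv hf hpos hint hle
  have hmaps := (bijOn_tailIntegralInv hf hpos hint hle).mapsTo
  by_contra! h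
  have := (tailIntegral_strictAntiOn hf hpos hint).antitoneOn (hmaps hs) (hmaps hr) h
  rw [hinv.2 hs, hinv.2 hr] at this
  linarith

theorem tendsto_tailIntegralInv_atTop (hf : ContinuousOn f (Ioi 0))
    (hpos : ∀ l, 0 < l → 0 < f l) (hint : IntegrableOn (fun l => (f l)⁻¹) (Ioi 1))
    (hle : ∀ l ∈ Ioc 0 1, f l ≤ C * l) : Tendsto (tailIntegralInv f) atTop (𝓝[>] 0) := by
  have hinv := invOn_tailIntegralInv hf hpos hint hle
  have hmaps := (bijOn_tailIntegralInv hf hpos hint hle).mapsTo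
  have hmem : ∀ᶠ r in atTop, tailIntegralInv f r ∈ Ioi 0 :=
    (eventually_gt_atTop 0).mono fun r hr => hmaps hr
  refine tendsto_nhdsWithin_iff.2 ⟨tendsto_order.2 ⟨fun a ha => ?_, fun ε hε => ?_⟩, hmem⟩
  · exact hmem.mono fun r hr => ha.trans hr
  · filter_upwards [eventually_gt_atTop (tailIntegral f ε)] with r hr
    have hr0 : 0 < r := (tailIntegral_pos hf hpos hint hε).trans hr
    by_contra! h
    have := (tailIntegral_strictAntiOn hf hpos hint).antitoneOn hε (hmaps hr0) h
    rw [hinv.2 hr0] at this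
    linarith

theorem continuousAt_tailIntegralInv (hf : ContinuousOn f (Ioi 0))
    (hpos : ∀ l, 0 < l → 0 < f l) (hint : IntegrableOn (fun l => (f l)⁻¹) (Ioi 1))
    (hle : ∀ l ∈ Ioc 0 1, f l ≤ C * l) {t : ℝ} (ht : 0 < t) :
    ContinuousAt (tailIntegralInv f) t := by
  have hbij := bijOn_tailIntegralInv hf hpos hint hle
  have himage : tailIntegralInv f '' Ioi 0 ∈ 𝓝 (tailIntegralInv f t) := by
    rw [hbij.image_eq]
    exact Ioi_mem_nhds (hbij.mapsTo ht)
  exact continuousAt_of_monotoneOn_of_image_mem_nhds (β := ℝᵒᵈ)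
    (tailIntegralInv_strictAntiOn hf hpos hint hle).antitoneOn (Ioi_mem_nhds ht) himage

theorem hasDerivAt_tailIntegralInv (hf : ContinuousOn f (Ioi 0))
    (hpos : ∀ l, 0 < l → 0 < f l) (hint : IntegrableOn (fun l => (f l)⁻¹) (Ioi 1))
    (hle : ∀ l ∈ Ioc 0 1, f l ≤ C * l) {t : ℝ} (ht : 0 < t) :
    HasDerivAt (tailIntegralInv f) (-f (tailIntegralInv f t)) t := by
  have hinv := invOn_tailIntegralInv hf hpos hint hle
  have hvt := (bijOn_tailIntegralInv hf hpos hint hle).mapsTo ht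
  have h := HasDerivAt.of_local_left_inverse (continuousAt_tailIntegralInv hf hpos hint hle ht)
    (hasDerivAt_tailIntegral hf hpos hint hvt) (neg_ne_zero.2 (inv_ne_zero (hpos _ hvt).ne'))
    (eventually_of_mem (Ioi_mem_nhds ht) fun s hs => hinv.2 hs)
  rwa [inv_neg, inv_inv] at h

end TailIntegral

theorem tendsto_sub_shift_of_hasDerivAt {g g' : ℝ → ℝ} {a t : ℝ} (ht : 0 < t)
    (hg : ∀ᶠ s in atTop, HasDerivAt g (g' s) s) (hg' : Tendsto g' atTop (𝓝 a)) :
    Tendsto (fun r => g r - g (r - t)) atTop (𝓝 (a * t)) := by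
  rw [Metric.tendsto_atTop]
  intro ε hε
  obtain ⟨R, hR⟩ := eventually_atTop.1 (hg.and (Metric.tendsto_nhds.1 hg' (ε / t) (div_pos hε ht)))
  refine ⟨R + t, fun r hr => ?_⟩
  obtain ⟨ξ, hξ, hslope⟩ := exists_hasDerivAt_eq_slope g g' (sub_lt_self r ht)
    (fun s hs => (hR s (by linarith [hs.1])).1.continuousAt.continuousWithinAt)
    (fun s hs => (hR s (by linarith [hs.1])).1)
  have hξa : |g' ξ - a| < ε / t := by simpa [Real.dist_eq] using (hR ξ (by linarith [hξ.1])).2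
  rw [sub_sub_cancel, eq_div_iff ht.ne'] at hslope
  rw [Real.dist_eq, ← hslope, ← sub_mul, abs_mul, abs_of_pos ht]
  exact (lt_div_iff₀ ht).1 hξa

theorem tendsto_div_shift_of_hasDerivAt {f f' v : ℝ → ℝ} {a t : ℝ} (ht : 0 < t)
    (hpos : ∀ l, 0 < l → 0 < f l) (hf : ∀ l, 0 < l → HasDerivAt f (f' l) l)
    (hf' : Tendsto f' (𝓝[>] 0) (𝓝 a)) (hv : ∀ᶠ s in atTop, HasDerivAt v (-f (v s)) s)
    (hv0 : Tendsto v atTop (𝓝[>] 0)) :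
    Tendsto (fun r => f (v (r - t)) / f (v r)) atTop (𝓝 (Real.exp (a * t))) := by
  have hvpos : ∀ᶠ s in atTop, 0 < v s := (tendsto_nhdsWithin_iff.1 hv0).2
  have hlog : Tendsto (fun r => -Real.log (f (v r)) - -Real.log (f (v (r - t)))) atTop
      (𝓝 (a * t)) := by
    refine tendsto_sub_shift_of_hasDerivAt ht ?_ (hf'.comp hv0)
    filter_upwards [hv, hvpos] with s hvs hs
    have h := (((hf (v s) hs).comp s hvs).log (hpos _ hs).ne').neg
    refine h.congr_deriv ?_
    simp only [Function.comp_apply, mul_neg, neg_div, neg_neg,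
      mul_div_cancel_right₀ _ (hpos _ hs).ne']
  have hshift : ∀ᶠ r in atTop, 0 < v (r - t) :=
    (tendsto_atTop_add_const_right atTop (-t) tendsto_id).eventually hvpos
  refine ((Real.continuous_exp.tendsto _).comp hlog).congr' ?_
  filter_upwards [hvpos, hshift] with r h1 h2
  simp only [Function.comp, Real.exp_sub, Real.exp_neg, Real.exp_log (hpos _ h1),
    Real.exp_log (hpos _ h2), inv_div_inv]

theorem tendsto_mul_exp_neg_shift_div {v : ℝ → ℝ} (hv : Tendsto v atTop (𝓝 0)) (t : ℝ) {x : ℝ}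
    (hx : x ≠ 0) (y : ℝ) :
    Tendsto (fun r => y * Real.exp (-(y * v (r - t))) / (x * Real.exp (-(x * v r)))) atTop
      (𝓝 (y / x)) := by
  have hshift : Tendsto (fun r : ℝ => r - t) atTop atTop :=
    tendsto_atTop_add_const_right atTop (-t) tendsto_id
  have h := ((tendsto_const_nhds (x := y)).mul ((Real.continuous_exp.tendsto _).comp
    ((hv.comp hshift).const_mul y).neg)).div ((tendsto_const_nhds (x := x)).mul
    ((Real.continuous_exp.tendsto _).comp (hv.const_mul x).neg)) (by simp [hx])
  simp only [mul_zero, neg_zero, Real.exp_zero, mul_one] at h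
  exact h

theorem exp_neg_sub_one_add_pos {u : ℝ} (hu : u ≠ 0) : 0 < Real.exp (-u) - 1 + u := by
  linarith [Real.add_one_lt_exp (neg_ne_zero.2 hu)]

theorem exp_neg_sub_one_add_le_min {u : ℝ} (hu : 0 ≤ u) :
    Real.exp (-u) - 1 + u ≤ min u (u ^ 2) := by
  have hexp : Real.exp (-u) ≤ 1 := Real.exp_le_one_iff.2 (neg_nonpos.2 hu)
  refine le_min (by linarith) ?_
  rcases le_total u 1 with h1 | h1
  · have h := Real.abs_exp_sub_one_sub_id_le (x := -u) (by rwa [abs_neg, abs_of_nonneg hu])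
    rw [neg_sq, sub_neg_eq_add] at h
    exact (le_abs_self _).trans h
  · nlinarith

theorem one_sub_exp_neg_le_min (u : ℝ) : 1 - Real.exp (-u) ≤ min 1 u :=
  le_min (by linarith [Real.exp_pos (-u)]) (by linarith [Real.add_one_le_exp (-u)])

theorem min_mul_le_max_mul_min {a b θ : ℝ} (ha : 0 ≤ a) (hθ : 0 ≤ θ) :
    min (a * θ) (b * θ ^ 2) ≤ max a b * min θ (θ ^ 2) := by
  rw [mul_min_of_nonneg _ _ (le_max_of_le_left ha)]
  exact min_le_min (mul_le_mul_of_nonneg_right (le_max_left a b) hθ)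
    (mul_le_mul_of_nonneg_right (le_max_right a b) (sq_nonneg θ))

theorem exp_neg_mul_sub_one_add_le {lam θ : ℝ} (hlam : 0 ≤ lam) (hθ : 0 ≤ θ) :
    Real.exp (-lam * θ) - 1 + lam * θ ≤ max lam (lam ^ 2) * min θ (θ ^ 2) :=
  calc Real.exp (-lam * θ) - 1 + lam * θ ≤ min (lam * θ) ((lam * θ) ^ 2) := by
        rw [neg_mul]; exact exp_neg_sub_one_add_le_min (mul_nonneg hlam hθ)
    _ = min (lam * θ) (lam ^ 2 * θ ^ 2) := by rw [mul_pow]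
    _ ≤ max lam (lam ^ 2) * min θ (θ ^ 2) := min_mul_le_max_mul_min hlam hθ

theorem mul_one_sub_exp_neg_mul_le {lam θ : ℝ} (hθ : 0 ≤ θ) :
    θ * (1 - Real.exp (-lam * θ)) ≤ max 1 lam * min θ (θ ^ 2) :=
  calc θ * (1 - Real.exp (-lam * θ)) ≤ θ * min 1 (lam * θ) := by
        rw [neg_mul]; exact mul_le_mul_of_nonneg_left (one_sub_exp_neg_le_min _) hθ
    _ = min (1 * θ) (lam * θ ^ 2) := by rw [mul_min_of_nonneg _ _ hθ]; ring_nf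
    _ ≤ max 1 lam * min θ (θ ^ 2) := min_mul_le_max_mul_min zero_le_one hθ

noncomputable def Phi' (α β : ℝ) (π : Measure ℝ) (lam : ℝ) : ℝ :=
  α + 2 * β * lam + ∫ θ, θ * (1 - Real.exp (-lam * θ)) ∂π

section BranchingMechanism

variable {α β : ℝ} {π : Measure ℝ}

theorem integrable_exp_neg_mul_sub_one_add (hπ : ∀ᵐ θ ∂π, 0 < θ)
    (hint : Integrable (fun θ => min θ (θ ^ 2)) π) {lam : ℝ} (hlam : 0 ≤ lam) :
    Integrable (fun θ => Real.exp (-lam * θ) - 1 + lam * θ) π := by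
  refine (hint.const_mul (max lam (lam ^ 2))).mono'
    (by fun_prop : Continuous _).aestronglyMeasurable ?_
  filter_upwards [hπ] with θ hθ
  rw [Real.norm_of_nonneg (by rw [neg_mul]; linarith [Real.add_one_le_exp (-(lam * θ))])]
  exact exp_neg_mul_sub_one_add_le hlam hθ.le

theorem Phi_le_mul (hβ : 0 ≤ β) (hπ : ∀ᵐ θ ∂π, 0 < θ)
    (hint : Integrable (fun θ => min θ (θ ^ 2)) π) {lam : ℝ} (h0 : 0 < lam) (h1 : lam ≤ 1) :
    Phi α β π lam ≤ (α + β + ∫ θ, min θ (θ ^ 2) ∂π) * lam := by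
  have hmax : max lam (lam ^ 2) = lam := max_eq_left (by nlinarith)
  have hI : ∫ θ, (Real.exp (-lam * θ) - 1 + lam * θ) ∂π ≤ lam * ∫ θ, min θ (θ ^ 2) ∂π := by
    rw [← integral_const_mul]
    refine integral_mono_ae (integrable_exp_neg_mul_sub_one_add hπ hint h0.le)
      (hint.const_mul lam) ?_
    filter_upwards [hπ] with θ hθ
    simpa only [hmax] using exp_neg_mul_sub_one_add_le h0.le hθ.le
  have hsq : β * lam ^ 2 ≤ β * lam := mul_le_mul_of_nonneg_left (by nlinarith) hβ
  unfold Phi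
  linarith

theorem Phi_pos (hα : 0 ≤ α) (hβ : 0 ≤ β) (hπ : ∀ᵐ θ ∂π, 0 < θ)
    (hint : Integrable (fun θ => min θ (θ ^ 2)) π) (hne : ∃ l : ℝ, 0 ≤ l ∧ Phi α β π l ≠ 0)
    {lam : ℝ} (hlam : 0 < lam) : 0 < Phi α β π lam := by
  obtain ⟨l, -, hl⟩ := hne
  have hkernel : ∀ᵐ θ ∂π, 0 < Real.exp (-lam * θ) - 1 + lam * θ := hπ.mono fun θ hθ => by
    rw [neg_mul]; exact exp_neg_sub_one_add_pos (mul_pos hlam hθ).ne'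
  have hI : 0 ≤ ∫ θ, (Real.exp (-lam * θ) - 1 + lam * θ) ∂π :=
    integral_nonneg_of_ae (hkernel.mono fun _ h => h.le)
  have hαl := mul_nonneg hα hlam.le
  have hβl := mul_nonneg hβ (sq_nonneg lam)
  by_contra! hle
  unfold Phi at hle
  have hα0 : α = 0 := (mul_eq_zero.1 (by linarith : α * lam = 0)).resolve_right hlam.ne'
  have hβ0 : β = 0 :=
    (mul_eq_zero.1 (by linarith : β * lam ^ 2 = 0)).resolve_right (pow_ne_zero 2 hlam.ne')
  have hπ0 : π = 0 := by
    have hzero := (integral_eq_zero_iff_of_nonneg_ae (hkernel.mono fun _ h => h.le)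
      (integrable_exp_neg_mul_sub_one_add hπ hint hlam.le)).1 (by linarith)
    have hfalse : ∀ᵐ θ ∂π, False := (hkernel.and hzero).mono fun θ h => h.1.ne' h.2
    simpa using hfalse
  exact hl (by simp [Phi, hα0, hβ0, hπ0])

theorem hasDerivAt_Phi (hπ : ∀ᵐ θ ∂π, 0 < θ) (hint : Integrable (fun θ => min θ (θ ^ 2)) π)
    {lam : ℝ} (hlam : 0 < lam) : HasDerivAt (Phi α β π) (Phi' α β π lam) lam := by
  have hkernel : HasDerivAt (fun x => ∫ θ, (Real.exp (-x * θ) - 1 + x * θ) ∂π)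
      (∫ θ, θ * (1 - Real.exp (-lam * θ)) ∂π) lam := by
    refine (hasDerivAt_integral_of_dominated_loc_of_deriv_le (Metric.ball_mem_nhds lam hlam)
      (F := fun x θ => Real.exp (-x * θ) - 1 + x * θ)
      (F' := fun x θ => θ * (1 - Real.exp (-x * θ)))
      (bound := fun θ => max 1 (2 * lam) * min θ (θ ^ 2))
      (Eventually.of_forall fun x => (by fun_prop : Continuous _).aestronglyMeasurable)
      (integrable_exp_neg_mul_sub_one_add hπ hint hlam.le)
      (by fun_prop : Continuous _).aestronglyMeasurable ?_ (hint.const_mul _) ?_).2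
    · filter_upwards [hπ] with θ hθ x hx
      rw [Metric.mem_ball, Real.dist_eq, abs_lt] at hx
      rw [Real.norm_of_nonneg (mul_nonneg hθ.le (by
        rw [neg_mul, sub_nonneg]; exact Real.exp_le_one_iff.2 (by nlinarith)))]
      exact (mul_one_sub_exp_neg_mul_le (lam := x) hθ.le).trans
        (mul_le_mul_of_nonneg_right (max_le_max le_rfl (by linarith : x ≤ 2 * lam))
          (le_min hθ.le (sq_nonneg θ)))
    · refine Eventually.of_forall fun θ x _ => ?_
      have h := (((hasDerivAt_neg' x).mul_const θ).exp.sub_const 1).add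
        ((hasDerivAt_id' x).mul_const θ)
      exact h.congr_deriv (by ring)
  have hpoly : HasDerivAt (fun x => α * x + β * x ^ 2) (α + 2 * β * lam) lam := by
    refine (((hasDerivAt_id' lam).const_mul α).add
      ((hasDerivAt_pow 2 lam).const_mul β)).congr_deriv ?_
    norm_num
    ring
  exact hpoly.add hkernel

theorem tendsto_Phi'_nhdsGT_zero (hπ : ∀ᵐ θ ∂π, 0 < θ)
    (hint : Integrable (fun θ => min θ (θ ^ 2)) π) :
    Tendsto (Phi' α β π) (𝓝[>] 0) (𝓝 α) := by
  have hI : Tendsto (fun lam => ∫ θ, θ * (1 - Real.exp (-lam * θ)) ∂π) (𝓝[>] 0)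
      (𝓝 (∫ θ, θ * (1 - Real.exp (-0 * θ)) ∂π)) := by
    refine tendsto_integral_filter_of_dominated_convergence (fun θ => min θ (θ ^ 2))
      (Eventually.of_forall fun _ => (by fun_prop : Continuous _).aestronglyMeasurable) ?_ hint
      (Eventually.of_forall fun θ => ((by fun_prop : Continuous fun lam =>
        θ * (1 - Real.exp (-lam * θ))).tendsto 0).mono_left nhdsWithin_le_nhds)
    filter_upwards [Ioo_mem_nhdsGT one_pos] with lam hlam
    filter_upwards [hπ] with θ hθ
    rw [Real.norm_of_nonneg (mul_nonneg hθ.le (by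
      rw [neg_mul, sub_nonneg]; exact Real.exp_le_one_iff.2 (by nlinarith [hlam.1])))]
    simpa [max_eq_left hlam.2.le] using mul_one_sub_exp_neg_mul_le (lam := lam) hθ.le
  have hlin : Tendsto (fun lam : ℝ => α + 2 * β * lam) (𝓝[>] 0) (𝓝 (α + 2 * β * 0)) :=
    ((by fun_prop : Continuous fun lam : ℝ => α + 2 * β * lam).tendsto 0).mono_left
      nhdsWithin_le_nhds
  have hlim := hlin.add hI
  rwa [show α + 2 * β * 0 + ∫ θ, θ * (1 - Real.exp (-0 * θ)) ∂π = α by simp] at hlim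

end BranchingMechanism

theorem height_density_ratio_limit_general
    (α β : ℝ) (hα : 0 ≤ α) (hβ : 0 ≤ β) (π : Measure ℝ)
    (hsupp : π (Set.Iic 0) = 0)
    (hint : Integrable (fun θ => min θ (θ ^ 2)) π)
    (hΦne : ∃ l : ℝ, 0 ≤ l ∧ Phi α β π l ≠ 0)
    (hH2 : IntegrableOn (fun l => (Phi α β π l)⁻¹) (Set.Ioi 1)) :
    -- note: Φ(λ) > 0 for all λ > 0 and ∫_{0+}^1 dλ/Φ(λ) = ∞
    (∀ l : ℝ, 0 < l → 0 < Phi α β π l) ∧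
    ¬ IntegrableOn (fun l => (Phi α β π l)⁻¹) (Set.Ioc 0 1) ∧
    ∃ v : ℝ → ℝ,
      (∀ t : ℝ, 0 < t →
        0 < v t ∧ (∫ l in Set.Ioi (v t), (Phi α β π l)⁻¹) = t) ∧
      (∀ w : ℝ → ℝ,
        (∀ t : ℝ, 0 < t →
          0 < w t ∧ (∫ l in Set.Ioi (w t), (Phi α β π l)⁻¹) = t) →
        ∀ t : ℝ, 0 < t → w t = v t) ∧
      StrictAntiOn v (Set.Ioi 0) ∧
      Tendsto v atTop (nhds 0) ∧
      (∀ t : ℝ, 0 < t → HasDerivAt v (-(Phi α β π (v t))) t) ∧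
      (∀ t : ℝ, 0 < t → ∀ x : ℝ, 0 < x → ∀ y : ℝ, 0 < y →
        Tendsto
          (fun r : ℝ =>
            (y * Real.exp (-(y * v (r - t))) * Phi α β π (v (r - t))) /
              (x * Real.exp (-(x * v r)) * Phi α β π (v r)))
          atTop (nhds (y / x * Real.exp (α * t)))) := by
  have hπ : ∀ᵐ θ ∂π, 0 < θ := ae_iff.2 (measure_mono_null (fun θ hθ => not_lt.1 hθ) hsupp)
  have hpos : ∀ l : ℝ, 0 < l → 0 < Phi α β π l := fun l hl => Phi_pos hα hβ hπ hint hΦne hl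
  have hcont : ContinuousOn (Phi α β π) (Ioi 0) := fun l hl =>
    (hasDerivAt_Phi hπ hint hl).continuousAt.continuousWithinAt
  have hle : ∀ l ∈ Ioc 0 1, Phi α β π l ≤ (α + β + ∫ θ, min θ (θ ^ 2) ∂π) * l :=
    fun l hl => Phi_le_mul hβ hπ hint hl.1 hl.2
  have hv0 := tendsto_tailIntegralInv_atTop hcont hpos hH2 hle
  have hderiv : ∀ t : ℝ, 0 < t → HasDerivAt (tailIntegralInv (Phi α β π))
      (-(Phi α β π (tailIntegralInv (Phi α β π) t))) t :=
    fun t ht => hasDerivAt_tailIntegralInv hcont hpos hH2 hle ht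
  refine ⟨hpos, not_integrableOn_inv_Ioc_zero_one hcont hpos hH2 hle, tailIntegralInv (Phi α β π),
    fun t ht => ⟨(bijOn_tailIntegralInv hcont hpos hH2 hle).mapsTo ht,
      (invOn_tailIntegralInv hcont hpos hH2 hle).2 ht⟩,
    fun w hw t ht => eq_tailIntegralInv_of_tailIntegral_eq hcont hpos hH2 hle (hw t ht).1
      (hw t ht).2,
    tailIntegralInv_strictAntiOn hcont hpos hH2 hle, hv0.mono_right nhdsWithin_le_nhds, hderiv,
    fun t ht x hx y _ => ?_⟩
  exact ((tendsto_mul_exp_neg_shift_div (hv0.mono_right nhdsWithin_le_nhds) t hx.ne' y).mul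
    (tendsto_div_shift_of_hasDerivAt ht hpos (fun l hl => hasDerivAt_Phi hπ hint hl)
      (tendsto_Phi'_nhdsGT_zero hπ hint) ((eventually_gt_atTop 0).mono hderiv) hv0)).congr
    fun r => (mul_div_mul_comm _ _ _ _).symm

/-- Analytic core of Proposition 4.8: under Assumption H2 in the (sub)critical
case, the function `v̄` defined by `∫_{v̄(t)}^∞ dλ/Φ(λ) = t` exists and is unique,
is strictly decreasing with `v̄(t) → 0` and `v̄' = -Φ(v̄)`, and the height-density
ratio `h_y(r-t)/h_x(r) = [y e^{-y v̄(r-t)} Φ(v̄(r-t))]/[x e^{-x v̄(r)} Φ(v̄(r))]`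
tends to `(y/x) e^{αt}` as `r → ∞`. -/
theorem height_density_ratio_limit
    (α β : ℝ) (hα : 0 ≤ α) (hβ : 0 ≤ β) (π : Measure ℝ)
    (hsupp : π (Set.Iic 0) = 0) (hσ : SigmaFinite π)
    (hint : Integrable (fun θ => min θ (θ ^ 2)) π)
    (hΦne : ∃ l : ℝ, 0 ≤ l ∧ Phi α β π l ≠ 0)
    (hH2 : IntegrableOn (fun l => (Phi α β π l)⁻¹) (Set.Ioi 1)) :
    -- note: Φ(λ) > 0 for all λ > 0 and ∫_{0+}^1 dλ/Φ(λ) = ∞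
    (∀ l : ℝ, 0 < l → 0 < Phi α β π l) ∧
    ¬ IntegrableOn (fun l => (Phi α β π l)⁻¹) (Set.Ioc 0 1) ∧
    ∃ v : ℝ → ℝ,
      (∀ t : ℝ, 0 < t →
        0 < v t ∧ (∫ l in Set.Ioi (v t), (Phi α β π l)⁻¹) = t) ∧
      (∀ w : ℝ → ℝ,
        (∀ t : ℝ, 0 < t →
          0 < w t ∧ (∫ l in Set.Ioi (w t), (Phi α β π l)⁻¹) = t) →
        ∀ t : ℝ, 0 < t → w t = v t) ∧
      StrictAntiOn v (Set.Ioi 0) ∧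
      Tendsto v atTop (nhds 0) ∧
      (∀ t : ℝ, 0 < t → HasDerivAt v (-(Phi α β π (v t))) t) ∧
      (∀ t : ℝ, 0 < t → ∀ x : ℝ, 0 < x → ∀ y : ℝ, 0 < y →
        Tendsto
          (fun r : ℝ =>
            (y * Real.exp (-(y * v (r - t))) * Phi α β π (v (r - t))) /
              (x * Real.exp (-(x * v r)) * Phi α β π (v r)))
          atTop (nhds (y / x * Real.exp (α * t)))) :=
  height_density_ratio_limit_general α β hα hβ π hsupp hint hΦne hH2
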